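/- arXiv:2310.14998 — 3 statements merged into one kernel-verified Lean document; each statement's English description precedes it below -/
import Mathlib

section
/- Let X ⊂ ℝ^{2n} be a centrally symmetric convex body with 0 in its interior. Then P ⋉_ω X = (P × ℝ^{2n}) ∩ ({u, −u} × X^ω)^ω, where P ⋉_ω X = {(v,x) ∈ P × ℝ^{2n} : |ω₂(u,v)| + ‖x‖_X ≤ 1}, P is the hexagon conv{±(1,1),±(1,0),±(0,1)}, and u = (1,1). -/
open Set

/-- The standard symplectic form on ℝ^{2n} = (Fin n → ℝ) × (Fin n → ℝ). -/
noncomputable def symForm (n : ℕ) (x y : (Fin n → ℝ) × (Fin n → ℝ)) : ℝ :=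
  ∑ i, (x.1 i * y.2 i - x.2 i * y.1 i)

/-- The symplectic polar of a set in ℝ^{2n}. -/
def sPolar (n : ℕ) (X : Set ((Fin n → ℝ) × (Fin n → ℝ))) : Set ((Fin n → ℝ) × (Fin n → ℝ)) :=
  {y | ∀ x ∈ X, symForm n x y ≤ 1}

/-- The standard area (symplectic) form on ℝ². -/
noncomputable def omega2 (v w : ℝ × ℝ) : ℝ := v.1 * w.2 - v.2 * w.1

/-- The hexagon P = conv{±(1,1), ±(1,0), ±(0,1)}. -/
noncomputable def hexP : Set (ℝ × ℝ) :=
  convexHull ℝ {(1,1), (1,0), (0,1), (-1,-1), (-1,0), (0,-1)}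

/-- ℝ^{2n+2} = ℝ² × ℝ^{2n}. -/
abbrev Amb (n : ℕ) := (ℝ × ℝ) × ((Fin n → ℝ) × (Fin n → ℝ))

/-- The direct-sum symplectic form on ℝ² × ℝ^{2n}. -/
noncomputable def symFormS (n : ℕ) (p q : Amb n) : ℝ :=
  omega2 p.1 q.1 + symForm n p.2 q.2

/-- The symplectic polar of a set in ℝ² × ℝ^{2n}. -/
def sPolarS (n : ℕ) (S : Set (Amb n)) : Set (Amb n) :=
  {q | ∀ p ∈ S, symFormS n p q ≤ 1}

/-- The symplectic P-suspension of a centrally symmetric convex body X ⊂ ℝ^{2n}. -/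
noncomputable def susp (n : ℕ) (X : Set ((Fin n → ℝ) × (Fin n → ℝ))) : Set (Amb n) :=
  {p | p.1 ∈ hexP ∧ |omega2 (1,1) p.1| + gauge X p.2 ≤ 1}

open Pointwise

/-! The suspension condition `|ω₂(u, v)| + ‖x‖_X ≤ 1` splits into the two conditions
`±ω₂(u, v) + ‖x‖_X ≤ 1`, which are exactly the polar conditions coming from the points `±u`,
once the gauge is written as a supremum over the symplectic polar: `‖x‖_X = sup_{y ∈ X^ω} ω(y, x)`.
That duality formula holds for every closed convex symmetric absorbent `X`; its nontrivial half
is Hahn–Banach separation, the separating functional being represented as `ω(y, ·)`. -/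

section SymplecticForm

variable {n : ℕ}

lemma symForm_swap (x y : (Fin n → ℝ) × (Fin n → ℝ)) : symForm n x y = -symForm n y x := by
  simp only [symForm, ← Finset.sum_neg_distrib]
  exact Finset.sum_congr rfl fun i _ => by ring

lemma symForm_smul_left (t : ℝ) (x y : (Fin n → ℝ) × (Fin n → ℝ)) :
    symForm n (t • x) y = t * symForm n x y := by
  simp only [symForm, Finset.mul_sum, Prod.smul_fst, Prod.smul_snd, Pi.smul_apply, smul_eq_mul]
  exact Finset.sum_congr rfl fun i _ => by ring

lemma symForm_smul_right (t : ℝ) (x y : (Fin n → ℝ) × (Fin n → ℝ)) :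
    symForm n x (t • y) = t * symForm n x y := by
  rw [symForm_swap, symForm_smul_left, symForm_swap y, mul_neg, neg_neg]

lemma symForm_neg_left (x y : (Fin n → ℝ) × (Fin n → ℝ)) :
    symForm n (-x) y = -symForm n x y := by
  simpa using symForm_smul_left (-1) x y

lemma exists_symForm_eq (f : ((Fin n → ℝ) × (Fin n → ℝ)) →ₗ[ℝ] ℝ) :
    ∃ y, ∀ z, symForm n y z = f z := by
  refine ⟨(fun i => f (0, Pi.single i 1), fun i => -f (Pi.single i 1, 0)), fun z => ?_⟩
  have hz : z = ∑ i, z.1 i • ((Pi.single i 1 : Fin n → ℝ), (0 : Fin n → ℝ))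
      + ∑ i, z.2 i • ((0 : Fin n → ℝ), (Pi.single i 1 : Fin n → ℝ)) := by
    ext j <;> simp [Prod.fst_sum, Prod.snd_sum, Finset.sum_apply, Pi.single_apply]
  conv_rhs => rw [hz]
  simp only [map_add, map_sum, map_smul, smul_eq_mul, symForm, ← Finset.sum_add_distrib]
  exact Finset.sum_congr rfl fun i _ => by ring

end SymplecticForm

section GaugeDuality

variable {n : ℕ} {X : Set ((Fin n → ℝ) × (Fin n → ℝ))}

lemma symForm_le_gauge (hsym : ∀ x ∈ X, -x ∈ X) (habs : Absorbent ℝ X)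
    {y : (Fin n → ℝ) × (Fin n → ℝ)} (hy : y ∈ sPolar n X) (x : (Fin n → ℝ) × (Fin n → ℝ)) :
    symForm n y x ≤ gauge X x := by
  refine le_of_forall_gt_imp_ge_of_dense fun t ht => ?_
  obtain ⟨r, hr0, hrt, z, hz, rfl⟩ := exists_lt_of_gauge_lt habs ht
  have hyz : symForm n y z ≤ 1 := by
    simpa [symForm_neg_left, ← symForm_swap] using hy (-z) (hsym z hz)
  rw [symForm_smul_right]
  exact (mul_le_of_le_one_right hr0.le hyz).trans hrt.le

lemma mem_smul_of_forall_symForm_le (hconv : Convex ℝ X) (hclosed : IsClosed X)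
    (hsym : ∀ x ∈ X, -x ∈ X) (h0 : (0 : (Fin n → ℝ) × (Fin n → ℝ)) ∈ X)
    {x : (Fin n → ℝ) × (Fin n → ℝ)} {r : ℝ} (hr : 0 < r)
    (h : ∀ y ∈ sPolar n X, symForm n y x ≤ r) : x ∈ r • X := by
  by_contra hx
  obtain ⟨f, u, hfX, hux⟩ :=
    geometric_hahn_banach_closed_point (hconv.smul r) (hclosed.smul₀ r) hx
  have hu : 0 < u := by simpa using hfX 0 ⟨0, h0, smul_zero r⟩
  obtain ⟨y, hy⟩ := exists_symForm_eq f.toLinearMap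
  have hpolar : (r / u) • y ∈ sPolar n X := fun z hz => by
    have hfz : -(r * f z) < u := by
      simpa using hfX _ (smul_mem_smul_set (a := r) (hsym z hz))
    rw [symForm_swap, symForm_smul_left, hy, ContinuousLinearMap.coe_coe]
    rw [div_mul_eq_mul_div, ← neg_div, div_le_one hu]
    exact hfz.le
  have hrx := h _ hpolar
  rw [symForm_smul_left, hy, ContinuousLinearMap.coe_coe, div_mul_eq_mul_div, div_le_iff₀ hu]
    at hrx
  exact hrx.not_gt (mul_lt_mul_of_pos_left hux hr)

lemma gauge_le_iff_forall_symForm_le (hconv : Convex ℝ X) (hclosed : IsClosed X)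
    (hsym : ∀ x ∈ X, -x ∈ X) (habs : Absorbent ℝ X) (x : (Fin n → ℝ) × (Fin n → ℝ)) (c : ℝ) :
    gauge X x ≤ c ↔ ∀ y ∈ sPolar n X, symForm n y x ≤ c := by
  refine ⟨fun hc y hy => (symForm_le_gauge hsym habs hy x).trans hc, fun h => ?_⟩
  have hc : 0 ≤ c := by simpa [symForm] using h 0 (by simp [sPolar, symForm])
  refine le_of_forall_gt_imp_ge_of_dense fun r hr => gauge_le_of_mem (hc.trans hr.le) ?_
  exact mem_smul_of_forall_symForm_le hconv hclosed hsym habs.zero_mem (hc.trans_lt hr)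
    fun y hy => (h y hy).trans hr.le

end GaugeDuality

lemma omega2_neg_left (u v : ℝ × ℝ) : omega2 (-u) v = -omega2 u v := by
  simp only [omega2, Prod.fst_neg, Prod.snd_neg]
  ring

lemma mem_sPolarS_pair_prod {n : ℕ} (u v : ℝ × ℝ) (x : (Fin n → ℝ) × (Fin n → ℝ))
    (Y : Set ((Fin n → ℝ) × (Fin n → ℝ))) :
    (v, x) ∈ sPolarS n ({u, -u} ×ˢ Y) ↔ ∀ y ∈ Y, |omega2 u v| + symForm n y x ≤ 1 := by
  have hpolar (w y) : symFormS n (w, y) (v, x) = omega2 w v + symForm n y x := rfl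
  constructor
  · intro h y hy
    have hu := hpolar u y ▸ h (u, y) ⟨mem_insert u _, hy⟩
    have hnu := hpolar (-u) y ▸ h (-u, y) ⟨mem_insert_of_mem u rfl, hy⟩
    rw [omega2_neg_left] at hnu
    rw [← le_sub_iff_add_le, abs_le']
    constructor <;> linarith
  · rintro h ⟨w, y⟩ ⟨rfl | rfl, hy⟩
    · linarith [le_abs_self (omega2 w v), h y hy, hpolar w y]
    · linarith [neg_le_abs (omega2 u v), h y hy, hpolar (-u) y, omega2_neg_left u v]

theorem stmt5 (n : ℕ) (X : Set ((Fin n → ℝ) × (Fin n → ℝ)))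
    (hconv : Convex ℝ X) (hcomp : IsCompact X) (hsym : ∀ x ∈ X, -x ∈ X)
    (h0 : (0 : (Fin n → ℝ) × (Fin n → ℝ)) ∈ interior X) :
    susp n X = (hexP ×ˢ (univ : Set ((Fin n → ℝ) × (Fin n → ℝ)))) ∩
      sPolarS n (({(1,1), (-1,-1)} : Set (ℝ × ℝ)) ×ˢ sPolar n X) := by
  have habs : Absorbent ℝ X := absorbent_nhds_zero (mem_interior_iff_mem_nhds.1 h0)
  have hpair : ({(1,1), (-1,-1)} : Set (ℝ × ℝ)) = {(1,1), -(1,1)} := by simp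
  ext ⟨v, x⟩
  rw [hpair, mem_inter_iff, mem_prod, mem_sPolarS_pair_prod]
  simp only [susp, mem_ofPred_eq, mem_univ, and_true, ← le_sub_iff_add_le',
    gauge_le_iff_forall_symForm_le hconv hcomp.isClosed hsym habs]
end

section
/- Let X ⊂ ℝ^{2n} be a symplectically self-polar convex body. Then P ⋉_ω X = conv((P × {0}) ∪ ({u,−u} × X)), where P ⋉_ω X = {(v,x) ∈ P × ℝ^{2n} : |ω₂(u,v)| + ‖x‖_X ≤ 1}, P = conv{±(1,1),±(1,0),±(0,1)} ⊂ ℝ², u = (1,1). -/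
/-!
The hexagon is `P = {v | |v₁| ≤ 1, |v₂| ≤ 1, |v₁ - v₂| ≤ 1}` and `ω₂(u, v) = v₂ - v₁`.
The suspension is a sublevel set of the convex function `|ω₂(u, v)| + ‖x‖_X` on `P × ℝ^{2n}`
and contains the generators, so it contains their convex hull. Conversely, for `(v, x)` in the
suspension put `t = ‖x‖_X` and write `x = t y` with `y ∈ X`; one finds `|s| ≤ t` and `w ∈ P` with
`v = s u + (1 - t) w`, and then
`(v, x) = (t + s)/2 • (u, y) + (t - s)/2 • (-u, y) + (1 - t) • (w, 0)`.
-/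

open Set

theorem Convex.combo_three_mem {E : Type*} [AddCommGroup E] [Module ℝ E] {S : Set E}
    (hS : Convex ℝ S) {x y z : E} (hx : x ∈ S) (hy : y ∈ S) (hz : z ∈ S) {a b c : ℝ}
    (ha : 0 ≤ a) (hb : 0 ≤ b) (hc : 0 ≤ c) (habc : a + b + c = 1) :
    a • x + b • y + c • z ∈ S := by
  simpa [Fin.sum_univ_three, add_assoc] using
    hS.sum_mem (t := Finset.univ) (w := ![a, b, c]) (z := ![x, y, z])
      (by simp [Fin.forall_fin_succ, ha, hb, hc]) (by simp [Fin.sum_univ_three, habc])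
      (by simp [Fin.forall_fin_succ, hx, hy, hz])

theorem Convex.smul_add_smul_mem_of_zero_mem {E : Type*} [AddCommGroup E] [Module ℝ E]
    {S : Set E} (hS : Convex ℝ S) (h0 : (0 : E) ∈ S) {x y : E} (hx : x ∈ S) (hy : y ∈ S)
    {a b : ℝ} (ha : 0 ≤ a) (hb : 0 ≤ b) (hab : a + b ≤ 1) : a • x + b • y ∈ S := by
  simpa using hS.combo_three_mem hx hy h0 (c := 1 - (a + b)) ha hb (sub_nonneg.2 hab) (by ring)

theorem convexOn_gauge {E : Type*} [AddCommGroup E] [Module ℝ E] {s : Set E}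
    (hs : Convex ℝ s) (habs : Absorbent ℝ s) : ConvexOn ℝ univ (gauge s) := by
  refine ⟨convex_univ, fun x _ y _ a b ha hb _ => ?_⟩
  calc gauge s (a • x + b • y) ≤ gauge s (a • x) + gauge s (b • y) := gauge_add_le hs habs _ _
    _ = a • gauge s x + b • gauge s y := by
      rw [gauge_smul_of_nonneg ha, gauge_smul_of_nonneg hb]

section ConvexBody

variable {E : Type*} [NormedAddCommGroup E] [NormedSpace ℝ E] {K : Set E}

theorem gauge_le_one_iff_mem (hc : Convex ℝ K) (hK : IsClosed K) (h0 : K ∈ nhds 0) {x : E} :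
    gauge K x ≤ 1 ↔ x ∈ K := by
  rw [gauge_le_one_iff_mem_closure hc h0, hK.closure_eq]

theorem exists_mem_eq_gauge_smul (hc : Convex ℝ K) (hK : IsCompact K) (h0 : K ∈ nhds 0)
    (x : E) : ∃ y ∈ K, x = gauge K x • y := by
  rcases eq_or_ne (gauge K x) 0 with h | h
  · refine ⟨0, mem_of_mem_nhds h0, ?_⟩
    rw [h, zero_smul]
    exact (gauge_eq_zero (absorbent_nhds_zero h0)
      (NormedSpace.isVonNBounded_of_isBounded ℝ hK.isBounded)).1 h
  · refine ⟨(gauge K x)⁻¹ • x, ?_, (smul_inv_smul₀ h x).symm⟩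
    rw [← gauge_le_one_iff_mem hc hK.isClosed h0,
      gauge_smul_of_nonneg (inv_nonneg.2 (gauge_nonneg x)), smul_eq_mul, inv_mul_cancel₀ h]

end ConvexBody

theorem abs_inv_mul_le_one_of_abs_le {a c : ℝ} (h : |a| ≤ c) : |c⁻¹ * a| ≤ 1 := by
  rw [abs_mul, abs_inv]
  exact inv_mul_le_one_of_le₀ (h.trans (le_abs_self c)) (abs_nonneg c)

theorem mul_inv_mul_cancel_of_abs_le {a c : ℝ} (h : |a| ≤ c) : c * (c⁻¹ * a) = a := by
  rcases eq_or_ne c 0 with rfl | hc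
  · simp [abs_nonpos_iff.1 h]
  · exact mul_inv_cancel_left₀ hc a

theorem convex_hexP : Convex ℝ hexP := convex_convexHull ℝ _

theorem zero_mem_hexP : (0 : ℝ × ℝ) ∈ hexP := by
  have := convex_hexP (x := (1, 1)) (y := (-1, -1)) (subset_convexHull ℝ _ (by simp))
    (subset_convexHull ℝ _ (by simp)) (a := 1 / 2) (b := 1 / 2) (by norm_num) (by norm_num)
    (by norm_num)
  convert this using 1
  ext <;> norm_num

theorem abs_le_one_of_mem_hexP {v : ℝ × ℝ} (hv : v ∈ hexP) :
    |v.1| ≤ 1 ∧ |v.2| ≤ 1 ∧ |v.1 - v.2| ≤ 1 := by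
  have hslab (f : ℝ × ℝ →ₗ[ℝ] ℝ) : Convex ℝ {w | |f w| ≤ 1} := by
    have := (convex_Icc (-1 : ℝ) 1).linear_preimage f
    rwa [show f ⁻¹' Icc (-1) 1 = {w | |f w| ≤ 1} by ext; simp [abs_le]] at this
  have hsub : hexP ⊆ {w | |w.1| ≤ 1} ∩ {w | |w.2| ≤ 1} ∩ {w | |w.1 - w.2| ≤ 1} := by
    refine convexHull_min ?_ (((hslab (LinearMap.fst ℝ ℝ ℝ)).inter
      (hslab (LinearMap.snd ℝ ℝ ℝ))).inter (hslab (LinearMap.fst ℝ ℝ ℝ - LinearMap.snd ℝ ℝ ℝ)))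
    simp only [insert_subset_iff, singleton_subset_iff]
    norm_num
  obtain ⟨⟨h1, h2⟩, h3⟩ := hsub hv
  exact ⟨h1, h2, h3⟩

theorem mem_hexP_of_abs_le_one {v : ℝ × ℝ} (h1 : |v.1| ≤ 1) (h2 : |v.2| ≤ 1)
    (h3 : |v.1 - v.2| ≤ 1) : v ∈ hexP := by
  have combo {p q : ℝ × ℝ} {a b : ℝ} (hp : p ∈ hexP) (hq : q ∈ hexP) (ha : 0 ≤ a) (hb : 0 ≤ b)
      (hab : a + b ≤ 1) : a • p + b • q ∈ hexP :=
    convex_hexP.smul_add_smul_mem_of_zero_mem zero_mem_hexP hp hq ha hb hab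
  have vertex : ∀ p ∈ ({(1,1), (1,0), (0,1), (-1,-1), (-1,0), (0,-1)} : Set (ℝ × ℝ)),
      p ∈ hexP := subset_convexHull ℝ _
  obtain ⟨a, b⟩ := v
  simp only [abs_le] at h1 h2 h3
  -- Each sector cut out by the signs of `a`, `b` and `a - b` is the triangle spanned by `0` and
  -- two adjacent vertices.
  rcases le_total 0 a with ha | ha <;> rcases le_total 0 b with hb | hb
  · rcases le_total b a with hba | hab
    · convert combo (vertex (1, 0) (by simp)) (vertex (1, 1) (by simp)) (sub_nonneg.2 hba) hb
        (by linarith) using 1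
      simp
    · convert combo (vertex (0, 1) (by simp)) (vertex (1, 1) (by simp)) (sub_nonneg.2 hab) ha
        (by linarith) using 1
      simp
  · convert combo (vertex (1, 0) (by simp)) (vertex (0, -1) (by simp)) ha (neg_nonneg.2 hb)
      (by linarith) using 1
    simp
  · convert combo (vertex (-1, 0) (by simp)) (vertex (0, 1) (by simp)) (neg_nonneg.2 ha) hb
      (by linarith) using 1
    simp
  · rcases le_total a b with hab | hba
    · convert combo (vertex (-1, 0) (by simp)) (vertex (-1, -1) (by simp)) (sub_nonneg.2 hab)
        (neg_nonneg.2 hb) (by linarith) using 1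
      simp
    · convert combo (vertex (0, -1) (by simp)) (vertex (-1, -1) (by simp)) (sub_nonneg.2 hba)
        (neg_nonneg.2 ha) (by linarith) using 1
      simp

theorem mem_hexP_iff (v : ℝ × ℝ) : v ∈ hexP ↔ |v.1| ≤ 1 ∧ |v.2| ≤ 1 ∧ |v.1 - v.2| ≤ 1 :=
  ⟨abs_le_one_of_mem_hexP, fun ⟨h1, h2, h3⟩ => mem_hexP_of_abs_le_one h1 h2 h3⟩

theorem omega2_one_one (v : ℝ × ℝ) : omega2 (1, 1) v = v.2 - v.1 := by simp [omega2]

theorem exists_eq_smul_add_smul_of_mem_hexP {v : ℝ × ℝ} (hv : v ∈ hexP) {t : ℝ} (ht : 0 ≤ t)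
    (hvt : |omega2 (1, 1) v| ≤ 1 - t) :
    ∃ s w, |s| ≤ t ∧ w ∈ hexP ∧ v = s • ((1, 1) : ℝ × ℝ) + (1 - t) • w := by
  obtain ⟨h1, h2, -⟩ := (mem_hexP_iff v).1 hv
  rw [omega2_one_one, abs_sub_comm] at hvt
  -- The four intervals constraining `s` overlap pairwise, so the largest lower end lies in all.
  obtain ⟨s, hs, hs1, hs2⟩ : ∃ s, |s| ≤ t ∧ |v.1 - s| ≤ 1 - t ∧ |v.2 - s| ≤ 1 - t := by
    refine ⟨max (-t) (max v.1 v.2 - (1 - t)), ?_⟩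
    simp only [abs_le] at *
    grind
  -- For `t = 1` the junk value `0⁻¹ = 0` gives `w = 0`, and then `v = s • (1, 1)`.
  refine ⟨s, ((1 - t)⁻¹ * (v.1 - s), (1 - t)⁻¹ * (v.2 - s)), hs, ?_, ?_⟩
  · refine (mem_hexP_iff _).2 ⟨abs_inv_mul_le_one_of_abs_le hs1,
      abs_inv_mul_le_one_of_abs_le hs2, ?_⟩
    rw [← mul_sub]
    exact abs_inv_mul_le_one_of_abs_le (by rwa [sub_sub_sub_cancel_right])
  · ext
    · simp [mul_inv_mul_cancel_of_abs_le hs1]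
    · simp [mul_inv_mul_cancel_of_abs_le hs2]

section Suspension

variable {n : ℕ} {X : Set ((Fin n → ℝ) × (Fin n → ℝ))}

theorem convex_susp (hc : Convex ℝ X) (habs : Absorbent ℝ X) : Convex ℝ (susp n X) := by
  let ω : Amb n →ₗ[ℝ] ℝ :=
    (LinearMap.snd ℝ ℝ ℝ - LinearMap.fst ℝ ℝ ℝ) ∘ₗ LinearMap.fst ℝ (ℝ × ℝ) _
  have hf : ConvexOn ℝ univ (fun p : Amb n => |omega2 (1, 1) p.1| + gauge X p.2) :=
    ((convexOn_univ_norm.comp_linearMap ω).add ((convexOn_gauge hc habs).comp_linearMap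
      (LinearMap.snd ℝ (ℝ × ℝ) _))).congr fun p _ => by simp [ω, omega2_one_one]
  convert (hf.subset (subset_univ _) (convex_hexP.prod convex_univ)).convex_le 1 using 1
  ext; simp [susp]

theorem convexHull_subset_susp (hc : Convex ℝ X) (habs : Absorbent ℝ X) :
    convexHull ℝ ((hexP ×ˢ ({0} : Set ((Fin n → ℝ) × (Fin n → ℝ)))) ∪
      (({(1,1), (-1,-1)} : Set (ℝ × ℝ)) ×ˢ X)) ⊆ susp n X := by
  refine convexHull_min ?_ (convex_susp hc habs)
  rintro ⟨v, x⟩ (⟨hv, rfl⟩ | ⟨rfl | rfl, hx⟩)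
  · refine ⟨hv, ?_⟩
    rw [gauge_zero, add_zero, omega2_one_one, abs_sub_comm]
    exact ((mem_hexP_iff v).1 hv).2.2
  all_goals
    refine ⟨subset_convexHull ℝ _ (by simp), ?_⟩
    simpa [omega2_one_one] using gauge_le_one_of_mem hx

theorem susp_subset_convexHull (hc : Convex ℝ X) (hK : IsCompact X) (h0 : X ∈ nhds 0) :
    susp n X ⊆ convexHull ℝ ((hexP ×ˢ ({0} : Set ((Fin n → ℝ) × (Fin n → ℝ)))) ∪
      (({(1,1), (-1,-1)} : Set (ℝ × ℝ)) ×ˢ X)) := by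
  rintro ⟨v, x⟩ ⟨hv, hvx : |omega2 (1, 1) v| + gauge X x ≤ 1⟩
  obtain ⟨y, hy, hxy⟩ := exists_mem_eq_gauge_smul hc hK h0 x
  obtain ⟨s, w, hs, hw, hvw⟩ :=
    exists_eq_smul_add_smul_of_mem_hexP hv (gauge_nonneg x) (by linarith)
  set t := gauge X x
  rw [abs_le] at hs
  suffices (v, x) = ((t + s) / 2) • (((1, 1) : ℝ × ℝ), y) + ((t - s) / 2) • ((-1, -1), y) +
      (1 - t) • (w, (0 : (Fin n → ℝ) × (Fin n → ℝ))) by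
    rw [this]
    refine Convex.combo_three_mem (convex_convexHull ℝ _) ?_ ?_ ?_ ?_ ?_ ?_ ?_
    exacts [subset_convexHull ℝ _ (Or.inr ⟨by simp, hy⟩),
      subset_convexHull ℝ _ (Or.inr ⟨by simp, hy⟩), subset_convexHull ℝ _ (Or.inl ⟨hw, rfl⟩),
      by linarith, by linarith, by linarith [abs_nonneg (omega2 (1, 1) v)], by ring]
  ext : 1
  · rw [hvw]; ext <;> simp <;> ring
  · simp only [Prod.smul_mk, Prod.mk_add_mk, smul_zero, add_zero, ← add_smul]
    rw [hxy]; congr 1; ring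

end Suspension

theorem stmt6_general (n : ℕ) (X : Set ((Fin n → ℝ) × (Fin n → ℝ)))
    (hconv : Convex ℝ X) (hcomp : IsCompact X)
    (h0 : (0 : (Fin n → ℝ) × (Fin n → ℝ)) ∈ interior X) :
    susp n X = convexHull ℝ
      ((hexP ×ˢ ({0} : Set ((Fin n → ℝ) × (Fin n → ℝ)))) ∪
        (({(1,1), (-1,-1)} : Set (ℝ × ℝ)) ×ˢ X)) := by
  have hX : X ∈ nhds 0 := mem_interior_iff_mem_nhds.1 h0
  exact (susp_subset_convexHull hconv hcomp hX).antisymm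
    (convexHull_subset_susp hconv (absorbent_nhds_zero hX))

theorem stmt6 (n : ℕ) (X : Set ((Fin n → ℝ) × (Fin n → ℝ)))
    (hconv : Convex ℝ X) (hcomp : IsCompact X) (hsym : ∀ x ∈ X, -x ∈ X)
    (h0 : (0 : (Fin n → ℝ) × (Fin n → ℝ)) ∈ interior X)
    (hself : X = sPolar n X) :
    susp n X = convexHull ℝ
      ((hexP ×ˢ ({0} : Set ((Fin n → ℝ) × (Fin n → ℝ)))) ∪
        (({(1,1), (-1,-1)} : Set (ℝ × ℝ)) ×ˢ X)) :=
  stmt6_general n X hconv hcomp h0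
end

section
/- Let K ⊂ ℝ^{2n} be a centrally symmetric convex polytope with K ⊆ K^ω, and let S be a centrally symmetric finite subset of K^ω such that |ω(v,w)| ≤ 1 for all v, w ∈ S. Then M = conv(K ∪ S) satisfies M ⊆ M^ω. -/
open Set

/- `X ⊆ X^ω` means `ω(x, y) ≤ 1` for all `x, y ∈ X`. For `X = K ∪ S` the pairs in
`K × K`, `K × S` and `S × S` are covered by the hypotheses, and a pair `(s, k) ∈ S × K` is
handled by antisymmetry, `ω(s, k) = ω(-k, s)`, together with `-k ∈ K`. Since the symplectic
polar of a set is an intersection of half-spaces, it equals the polar of the convex hull, so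
`X ⊆ X^ω` passes to `conv X`. -/

lemma isLinearMap_symForm_left (n : ℕ) (y : (Fin n → ℝ) × (Fin n → ℝ)) :
    IsLinearMap ℝ (fun x => symForm n x y) where
  map_add x z := by
    simp only [symForm, ← Finset.sum_add_distrib, Prod.fst_add, Prod.snd_add, Pi.add_apply]
    exact Finset.sum_congr rfl fun i _ => by ring
  map_smul a x := by
    simp only [symForm, Finset.mul_sum, Prod.smul_fst, Prod.smul_snd, Pi.smul_apply,
      smul_eq_mul]
    exact Finset.sum_congr rfl fun i _ => by ring

lemma symForm_antisymm (n : ℕ) (x y : (Fin n → ℝ) × (Fin n → ℝ)) :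
    symForm n x y = -symForm n y x := by
  simp only [symForm, ← Finset.sum_neg_distrib]
  exact Finset.sum_congr rfl fun i _ => by ring

lemma symForm_eq_symForm_neg_swap (n : ℕ) (x y : (Fin n → ℝ) × (Fin n → ℝ)) :
    symForm n x y = symForm n (-y) x := by
  rw [symForm_antisymm]
  exact ((isLinearMap_symForm_left n x).mk'.map_neg y).symm

lemma isLinearMap_symForm_right (n : ℕ) (x : (Fin n → ℝ) × (Fin n → ℝ)) :
    IsLinearMap ℝ (fun y => symForm n x y) := by
  simp only [symForm_eq_symForm_neg_swap n x]
  exact ((isLinearMap_symForm_left n x).mk'.comp (-LinearMap.id)).isLinear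

lemma convex_sPolar (n : ℕ) (X : Set ((Fin n → ℝ) × (Fin n → ℝ))) : Convex ℝ (sPolar n X) := by
  have : sPolar n X = ⋂ x ∈ X, {y | symForm n x y ≤ 1} := by ext; simp [sPolar]
  rw [this]
  exact convex_iInter₂ fun x _ => convex_halfSpace_le (isLinearMap_symForm_right n x) 1

lemma sPolar_convexHull (n : ℕ) (X : Set ((Fin n → ℝ) × (Fin n → ℝ))) :
    sPolar n (convexHull ℝ X) = sPolar n X := by
  refine Subset.antisymm (fun y hy x hx => hy x (subset_convexHull ℝ X hx)) fun y hy => ?_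
  exact fun x hx => convexHull_min (t := {x | symForm n x y ≤ 1}) hy
    (convex_halfSpace_le (isLinearMap_symForm_left n y) 1) hx

lemma convexHull_subset_sPolar_convexHull (n : ℕ) {X : Set ((Fin n → ℝ) × (Fin n → ℝ))}
    (hX : X ⊆ sPolar n X) : convexHull ℝ X ⊆ sPolar n (convexHull ℝ X) := by
  rw [sPolar_convexHull]
  exact convexHull_min hX (convex_sPolar n X)

lemma union_subset_sPolar_union (n : ℕ) {K S : Set ((Fin n → ℝ) × (Fin n → ℝ))}
    (hKsym : ∀ v ∈ K, -v ∈ K) (hKsub : K ⊆ sPolar n K) (hSsub : S ⊆ sPolar n K)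
    (hSω : ∀ v ∈ S, ∀ w ∈ S, symForm n v w ≤ 1) : K ∪ S ⊆ sPolar n (K ∪ S) := by
  rintro y (hy | hy) x (hx | hx)
  · exact hKsub hy x hx
  · rw [symForm_eq_symForm_neg_swap]
    exact hSsub hx (-y) (hKsym y hy)
  · exact hSsub hy x hx
  · exact hSω x hx y hy

lemma neg_mem_convexHull {𝕜 E : Type*} [Ring 𝕜] [PartialOrder 𝕜] [AddCommGroup E] [Module 𝕜 E]
    {V : Set E} (hV : ∀ v ∈ V, -v ∈ V) {x : E} (hx : x ∈ convexHull 𝕜 V) :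
    -x ∈ convexHull 𝕜 V := by
  have hV' : -V ⊆ V := fun v hv => by simpa using hV (-v) hv
  have : -convexHull 𝕜 V ⊆ convexHull 𝕜 V := convexHull_neg (𝕜 := 𝕜) V ▸ convexHull_mono hV'
  exact this (by simpa using hx)

theorem stmt13_general (n : ℕ) (V : Set ((Fin n → ℝ) × (Fin n → ℝ)))
    (hVsym : ∀ v ∈ V, -v ∈ V)
    (K : Set ((Fin n → ℝ) × (Fin n → ℝ))) (hK : K = convexHull ℝ V)
    (hKsub : K ⊆ sPolar n K)
    (S : Set ((Fin n → ℝ) × (Fin n → ℝ))) (hSsub : S ⊆ sPolar n K)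
    (hSω : ∀ v ∈ S, ∀ w ∈ S, |symForm n v w| ≤ 1) :
    convexHull ℝ (K ∪ S) ⊆ sPolar n (convexHull ℝ (K ∪ S)) := by
  subst hK
  refine convexHull_subset_sPolar_convexHull n (union_subset_sPolar_union n ?_ hKsub hSsub ?_)
  · exact fun v hv => neg_mem_convexHull hVsym hv
  · exact fun v hv w hw => (le_abs_self _).trans (hSω v hv w hw)

theorem stmt13 (n : ℕ) (V : Set ((Fin n → ℝ) × (Fin n → ℝ))) (hVfin : V.Finite)
    (hVsym : ∀ v ∈ V, -v ∈ V)
    (K : Set ((Fin n → ℝ) × (Fin n → ℝ))) (hK : K = convexHull ℝ V)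
    (h0 : (0 : (Fin n → ℝ) × (Fin n → ℝ)) ∈ interior K)
    (hKsub : K ⊆ sPolar n K)
    (S : Set ((Fin n → ℝ) × (Fin n → ℝ))) (hSfin : S.Finite)
    (hSsym : ∀ v ∈ S, -v ∈ S) (hSsub : S ⊆ sPolar n K)
    (hSω : ∀ v ∈ S, ∀ w ∈ S, |symForm n v w| ≤ 1) :
    convexHull ℝ (K ∪ S) ⊆ sPolar n (convexHull ℝ (K ∪ S)) :=
  stmt13_general n V hVsym K hK hKsub S hSsub hSω
end
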